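/- arXiv:1701.02525 — 3 statements merged into one kernel-verified Lean document; each statement's English description precedes it below -/
import Mathlib

section
/- Let p be a prime, m ≥ 1, and let a ∈ F_p[x] be a monic polynomial with deg(a) ≤ m. For a nonzero polynomial h = h_0 + h_1 x + ... + h_a x^a over F_p with leading coefficient h_a ≠ 0, define r_p(h) = 1/(p^{a+1} sin²(π h_a / p)). Then the sum of r_p(h) over all nonzero polynomials h of degree < m that are divisible by a equals (m - deg(a)) · ((p² - 1)/(3p)) · p^{-deg(a)}. -/
/-!
For an `n`-th root of unity `z ≠ 1` one has `(z - 1) ∑_{j<n} j z^j = n`, so `1/(1 - z)` is, up to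
the factor `-1/n`, the discrete Fourier transform of `j ↦ j`. Parseval's identity for this transform,
together with `|1 - e^{2πik/n}|² = 4 sin²(πk/n)`, gives `∑_{k=1}^{n-1} csc²(πk/n) = (n² - 1)/3`.

Among the polynomials of degree `< M` over `𝔽_p`, those of degree `d` with leading coefficient `c`
are `p^d` in number, so each degree `d < M` contributes `p⁻¹ ∑_{c=1}^{p-1} csc²(πc/p) = (p² - 1)/(3p)`
to `∑ r_p`. Finally, multiplication by the monic `a` maps the polynomials of degree `< m - deg a`
bijectively onto the multiples of `a` of degree `< m`, and it multiplies `r_p` by `p^{-deg a}`.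
-/

open Polynomial Finset
open scoped Classical

/-- The set `G_{p,m}` of polynomials over `F_p` of degree `< m`. -/
noncomputable def Gset (p m : ℕ) [NeZero p] : Finset (Polynomial (ZMod p)) :=
  (Finset.univ : Finset (Fin m → ZMod p)).image
    (fun c => ∑ i : Fin m, Polynomial.C (c i) * Polynomial.X ^ (i : ℕ))

/-- `r_p(h) = 1/(p^{a+1} sin²(π h_a/p))` for `h` of degree `a` with leading coefficient `h_a`. -/
noncomputable def rp (p : ℕ) (h : Polynomial (ZMod p)) : ℝ :=
  1 / ((p : ℝ) ^ (h.natDegree + 1) * Real.sin (Real.pi * (h.leadingCoeff.val : ℝ) / p) ^ 2)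

section RootsOfUnity

variable {K : Type*} [Field K] {n : ℕ}

theorem sub_one_mul_sum_range_natCast_mul_pow {z : K} (hzn : z ^ n = 1) (hz : z ≠ 1) :
    (z - 1) * ∑ j ∈ range n, (j : K) * z ^ j = n := by
  have telescoped : ∀ N : ℕ, (z - 1) * ∑ j ∈ range N, (j : K) * z ^ j
      = ((N : K) - 1) * z ^ N - ∑ j ∈ range N, z ^ j + 1 := by
    intro N
    induction N with
    | zero => simp
    | succ N ih =>
      rw [sum_range_succ, sum_range_succ, mul_add, ih]
      push_cast
      ring
  rw [telescoped, geom_sum_eq hz, hzn]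
  simp

theorem twelve_mul_sum_range_sq_sub_sq_sum_range {R : Type*} [CommRing R] (n : ℕ) :
    12 * ((n : R) * ∑ j ∈ range n, (j : R) ^ 2 - (∑ j ∈ range n, (j : R)) ^ 2)
      = (n : R) ^ 2 * ((n : R) ^ 2 - 1) := by
  have h1 : 2 * ∑ j ∈ range n, (j : R) = n * (n - 1) := by
    induction n with
    | zero => simp
    | succ N ih => rw [sum_range_succ, mul_add, ih]; push_cast; ring
  have h2 : 6 * ∑ j ∈ range n, (j : R) ^ 2 = n * (n - 1) * (2 * n - 1) := by
    clear h1
    induction n with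
    | zero => simp
    | succ N ih => rw [sum_range_succ, mul_add, ih]; push_cast; ring
  linear_combination 2 * (n : R) * h2 - 3 * (2 * ∑ j ∈ range n, (j : R) + n * (n - 1)) * h1

namespace IsPrimitiveRoot

variable {ζ : K}

theorem sum_range_pow_mul_inv_pow (hζ : IsPrimitiveRoot ζ n) {i j : ℕ} (hi : i < n)
    (hj : j < n) : ∑ k ∈ range n, (ζ ^ i * ζ⁻¹ ^ j) ^ k = if i = j then (n : K) else 0 := by
  have hζ0 : ζ ≠ 0 := hζ.ne_zero (by omega)
  split_ifs with hij
  · subst hij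
    simp [hζ0]
  · have hne : ζ ^ i * ζ⁻¹ ^ j ≠ 1 := by
      rw [inv_pow, ne_eq, mul_inv_eq_one₀ (pow_ne_zero _ hζ0)]
      exact fun h => hij (hζ.pow_inj hi hj h)
    rw [geom_sum_eq hne, mul_pow, pow_right_comm, pow_right_comm ζ⁻¹, inv_pow, hζ.pow_eq_one]
    simp

-- Parseval's identity for the discrete Fourier transform on `ℤ/n`.
theorem sum_range_mul_sum_range_inv (hζ : IsPrimitiveRoot ζ n) (f g : ℕ → K) :
    ∑ k ∈ range n, (∑ i ∈ range n, f i * (ζ ^ k) ^ i) * ∑ j ∈ range n, g j * (ζ⁻¹ ^ k) ^ j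
      = n * ∑ i ∈ range n, f i * g i := by
  calc _ = ∑ i ∈ range n, ∑ j ∈ range n, f i * g j * ∑ k ∈ range n, (ζ ^ i * ζ⁻¹ ^ j) ^ k := by
        simp_rw [sum_mul_sum, mul_sum]
        rw [sum_comm]
        refine sum_congr rfl fun i _ => ?_
        rw [sum_comm]
        refine sum_congr rfl fun j _ => sum_congr rfl fun k _ => ?_
        ring
    _ = ∑ i ∈ range n, f i * g i * n := by
        refine sum_congr rfl fun i hi => ?_
        rw [sum_congr rfl fun j hj => by
          rw [hζ.sum_range_pow_mul_inv_pow (mem_range.1 hi) (mem_range.1 hj)]]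
        simp [mul_ite, hi]
    _ = _ := by rw [← sum_mul, mul_comm]

theorem sum_Ico_inv_one_sub_pow_mul_one_sub_inv_pow [CharZero K] (hζ : IsPrimitiveRoot ζ n)
    (hn : 0 < n) :
    ∑ k ∈ Ico 1 n, 1 / ((1 - ζ ^ k) * (1 - ζ⁻¹ ^ k)) = ((n : K) ^ 2 - 1) / 12 := by
  have hn0 : (n : K) ≠ 0 := by exact_mod_cast hn.ne'
  have term : ∀ k ∈ Ico 1 n, (∑ i ∈ range n, (i : K) * (ζ ^ k) ^ i)
      * ∑ j ∈ range n, (j : K) * (ζ⁻¹ ^ k) ^ j = n ^ 2 * (1 / ((1 - ζ ^ k) * (1 - ζ⁻¹ ^ k))) := by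
    intro k hk
    obtain ⟨hk1, hkn⟩ := mem_Ico.1 hk
    have hz : ζ ^ k ≠ 1 := fun h => by
      have := Nat.le_of_dvd hk1 ((hζ.pow_eq_one_iff_dvd k).1 h); omega
    have hz' : ζ⁻¹ ^ k ≠ 1 := by rwa [inv_pow, ne_eq, inv_eq_one]
    have hS := sub_one_mul_sum_range_natCast_mul_pow
      (by rw [pow_right_comm, hζ.pow_eq_one, one_pow]) hz
    have hS' := sub_one_mul_sum_range_natCast_mul_pow
      (by rw [pow_right_comm, inv_pow, hζ.pow_eq_one, inv_one, one_pow]) hz'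
    have h1 : 1 - ζ ^ k ≠ 0 := sub_ne_zero.2 hz.symm
    have h2 : 1 - ζ⁻¹ ^ k ≠ 0 := sub_ne_zero.2 hz'.symm
    rw [mul_one_div, eq_div_iff (mul_ne_zero h1 h2)]
    linear_combination (ζ⁻¹ ^ k - 1) * (∑ j ∈ range n, (j : K) * (ζ⁻¹ ^ k) ^ j) * hS + n * hS'
  have parseval := hζ.sum_range_mul_sum_range_inv (fun i => (i : K)) (fun i => (i : K))
  rw [range_eq_Ico, sum_eq_sum_Ico_succ_bot hn, ← range_eq_Ico, sum_congr rfl term,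
    ← mul_sum] at parseval
  simp only [pow_zero, one_pow, mul_one, ← sq] at parseval
  apply mul_left_cancel₀ (pow_ne_zero 2 hn0)
  linear_combination parseval + twelve_mul_sum_range_sq_sub_sq_sum_range (R := K) n / 12

end IsPrimitiveRoot

end RootsOfUnity

open Complex in
theorem one_sub_exp_mul_one_sub_exp_neg (x : ℝ) :
    (1 - exp (2 * x * I)) * (1 - exp (-(2 * x * I))) = 4 * Real.sin x ^ 2 := by
  have hprod : exp (2 * x * I) * exp (-(2 * x * I)) = 1 := by
    rw [← exp_add, add_neg_cancel, exp_zero]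
  have hcos := two_cos (2 * x)
  rw [neg_mul] at hcos
  push_cast
  linear_combination hprod + hcos - 2 * cos_two_mul (x : ℂ) - 4 * sin_sq_add_cos_sq (x : ℂ)

theorem sum_Ico_inv_sin_sq {n : ℕ} (hn : 0 < n) :
    ∑ k ∈ Ico 1 n, 1 / Real.sin (Real.pi * k / n) ^ 2 = ((n : ℝ) ^ 2 - 1) / 3 := by
  have hζ := Complex.isPrimitiveRoot_exp n hn.ne'
  have key := hζ.sum_Ico_inv_one_sub_pow_mul_one_sub_inv_pow hn
  have four_sin_sq : ∀ k : ℕ, (1 - Complex.exp (2 * Real.pi * Complex.I / n) ^ k)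
      * (1 - (Complex.exp (2 * Real.pi * Complex.I / n))⁻¹ ^ k)
        = 4 * Real.sin (Real.pi * k / n) ^ 2 := by
    intro k
    rw [← one_sub_exp_mul_one_sub_exp_neg, inv_pow, ← Complex.exp_nat_mul, ← Complex.exp_neg]
    push_cast
    ring_nf
  simp_rw [four_sin_sq] at key
  have hreal : ∑ k ∈ Ico 1 n, 1 / (4 * Real.sin (Real.pi * k / n) ^ 2)
      = ((n : ℝ) ^ 2 - 1) / 12 := by
    exact_mod_cast key
  calc _ = 4 * ∑ k ∈ Ico 1 n, 1 / (4 * Real.sin (Real.pi * k / n) ^ 2) := by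
        rw [mul_sum]
        exact sum_congr rfl fun k _ => by ring
    _ = _ := by rw [hreal]; ring

theorem ZMod.sum_erase_zero_val {M : Type*} [AddCommMonoid M] (n : ℕ) [NeZero n] (f : ℕ → M) :
    ∑ c ∈ univ.erase (0 : ZMod n), f c.val = ∑ k ∈ Ico 1 n, f k :=
  sum_nbij' ZMod.val Nat.cast
    (fun c hc => by simpa [Nat.one_le_iff_ne_zero, ZMod.val_lt] using hc)
    (fun k hk => by
      obtain ⟨hk1, hkn⟩ := mem_Ico.1 hk
      have := ZMod.val_natCast_of_lt hkn
      simp only [mem_erase, mem_univ, and_true, ne_eq]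
      rintro h
      rw [h, ZMod.val_zero] at this
      omega)
    (fun c _ => ZMod.natCast_zmod_val c)
    (fun k hk => ZMod.val_natCast_of_lt (mem_Ico.1 hk).2)
    (fun _ _ => rfl)

theorem injective_sum_C_mul_X_pow {p : ℕ} (m : ℕ) :
    Function.Injective (fun c : Fin m → ZMod p => ∑ i : Fin m, C (c i) * X ^ (i : ℕ)) := by
  intro c d hcd
  funext i
  simpa [finsetSum_coeff, coeff_C_mul, coeff_X_pow, Fin.val_inj] using congrArg (coeff · i) hcd

theorem Polynomial.Monic.degree_mul_lt_iff {R : Type*} [Semiring R] {a q : R[X]} (ha : a.Monic)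
    {m : ℕ} (hm : a.natDegree ≤ m) : (a * q).degree < m ↔ q.degree < (m - a.natDegree : ℕ) := by
  rcases eq_or_ne q 0 with rfl | hq
  · simp
  · rw [← natDegree_lt_iff_degree_lt (ha.mul_right_eq_zero_iff.not.2 hq),
      ← natDegree_lt_iff_degree_lt hq, ha.natDegree_mul' hq]
    omega

section Gset

variable {p : ℕ}

-- The paper leaves `r_p(0)` undefined; Lean's `1 / 0 = 0` makes it `0`, so sums over `G_{p,m}`
-- may include `h = 0`.
theorem rp_zero : rp p 0 = 0 := by
  simp [rp]

theorem rp_C_mul_X_pow_add {c : ZMod p} (hc : c ≠ 0) {d : ℕ} {r : (ZMod p)[X]}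
    (hr : r.degree < d) :
    rp p (C c * X ^ d + r) = 1 / ((p : ℝ) ^ (d + 1) * Real.sin (Real.pi * c.val / p) ^ 2) := by
  have hlt : r.degree < (C c * X ^ d).degree := by rwa [degree_C_mul_X_pow d hc]
  rw [rp, natDegree_add_eq_left_of_degree_lt hlt, leadingCoeff_add_of_degree_lt' hlt,
    natDegree_C_mul_X_pow d c hc, leadingCoeff_C_mul_X_pow]

theorem rp_monic_mul {a : (ZMod p)[X]} (ha : a.Monic) (q : (ZMod p)[X]) :
    rp p (a * q) = ((p : ℝ) ^ a.natDegree)⁻¹ * rp p q := by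
  rcases eq_or_ne q 0 with rfl | hq
  · simp [rp_zero]
  · rw [rp, rp, ha.natDegree_mul' hq, leadingCoeff_monic_mul ha, add_assoc, pow_add]
    ring

variable [NeZero p]

theorem mem_Gset {m : ℕ} {h : (ZMod p)[X]} : h ∈ Gset p m ↔ h.degree < m := by
  constructor
  · rintro hh
    obtain ⟨c, -, rfl⟩ := mem_image.1 hh
    exact degree_sum_fin_lt c
  · intro hh
    refine mem_image.2 ⟨fun i => h.coeff i, mem_univ _, ?_⟩
    rw [Fin.sum_univ_eq_sum_range (fun i => C (h.coeff i) * X ^ i)]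
    rcases eq_or_ne h 0 with rfl | h0
    · simp
    · exact (as_sum_range_C_mul_X_pow' h ((natDegree_lt_iff_degree_lt h0).2 hh)).symm

theorem card_Gset (m : ℕ) : #(Gset p m) = p ^ m := by
  rw [Gset, card_image_of_injective _ (injective_sum_C_mul_X_pow m)]
  simp

theorem sum_Gset_succ {M : Type*} [AddCommMonoid M] (d : ℕ) (f : (ZMod p)[X] → M) :
    ∑ h ∈ Gset p (d + 1), f h = ∑ c : ZMod p, ∑ r ∈ Gset p d, f (C c * X ^ d + r) := by
  simp_rw [Gset, sum_image fun x _ y _ hxy => injective_sum_C_mul_X_pow _ hxy]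
  rw [← (Fin.snocEquiv fun _ => ZMod p).sum_comp, Fintype.sum_prod_type]
  simp [Fin.sum_univ_castSucc, add_comm]

theorem sum_rp_Gset (M : ℕ) : ∑ h ∈ Gset p M, rp p h = M * (((p : ℝ) ^ 2 - 1) / (3 * p)) := by
  induction M with
  | zero => simp [Gset, rp_zero]
  | succ M ih =>
    have hp : (p : ℝ) ≠ 0 := Nat.cast_ne_zero.2 (NeZero.ne p)
    have slice : ∀ c ∈ univ.erase (0 : ZMod p), ∑ r ∈ Gset p M, rp p (C c * X ^ M + r)
        = (p : ℝ)⁻¹ * (1 / Real.sin (Real.pi * c.val / p) ^ 2) := by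
      intro c hc
      rw [sum_congr rfl fun r hr => rp_C_mul_X_pow_add (ne_of_mem_erase hc) (mem_Gset.1 hr),
        sum_const, card_Gset, nsmul_eq_mul]
      push_cast
      field_simp
      ring
    have csc : ∑ c ∈ univ.erase (0 : ZMod p), 1 / Real.sin (Real.pi * c.val / p) ^ 2
        = ((p : ℝ) ^ 2 - 1) / 3 :=
      (ZMod.sum_erase_zero_val p fun k => 1 / Real.sin (Real.pi * k / p) ^ 2).trans
        (sum_Ico_inv_sin_sq (NeZero.pos p))
    rw [sum_Gset_succ, ← univ.add_sum_erase _ (mem_univ 0), sum_congr rfl slice, ← mul_sum, csc]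
    simp only [C_0, zero_mul, zero_add, ih]
    push_cast
    field_simp

theorem filter_dvd_Gset {a : (ZMod p)[X]} (ha : a.Monic) {m : ℕ} (hm : a.natDegree ≤ m) :
    (Gset p m).filter (a ∣ ·) = (Gset p (m - a.natDegree)).image (a * ·) := by
  ext h
  simp only [mem_filter, mem_image, mem_Gset]
  constructor
  · rintro ⟨hh, q, rfl⟩
    exact ⟨q, (ha.degree_mul_lt_iff hm).1 hh, rfl⟩
  · rintro ⟨q, hq, rfl⟩
    exact ⟨(ha.degree_mul_lt_iff hm).2 hq, dvd_mul_right a q⟩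

end Gset

theorem sum_rp_dvd_general (p : ℕ) [Fact p.Prime] (m : ℕ)
    (a : Polynomial (ZMod p)) (ha : a.Monic) (hadeg : a.natDegree ≤ m) :
    ∑ h ∈ (Gset p m).filter (fun h => h ≠ 0 ∧ a ∣ h), rp p h
      = ((m : ℝ) - (a.natDegree : ℝ)) * (((p : ℝ) ^ 2 - 1) / (3 * p))
        * (p : ℝ) ^ (-(a.natDegree : ℤ)) := by
  have drop_zero : ∑ h ∈ (Gset p m).filter (fun h => h ≠ 0 ∧ a ∣ h), rp p h
      = ∑ h ∈ (Gset p m).filter (a ∣ ·), rp p h :=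
    sum_subset (monotone_filter_right _ fun _ _ hh => hh.2) fun h _ hh => by
      obtain rfl : h = 0 := by simp_all
      exact rp_zero
  rw [drop_zero, filter_dvd_Gset ha hadeg, sum_image fun _ _ _ _ h => ha.isRegular.left h]
  simp_rw [rp_monic_mul ha]
  rw [← mul_sum, sum_rp_Gset, Nat.cast_sub hadeg, zpow_neg, zpow_natCast]
  ring

theorem sum_rp_dvd (p : ℕ) [Fact p.Prime] (m : ℕ) (hm : 1 ≤ m)
    (a : Polynomial (ZMod p)) (ha : a.Monic) (hadeg : a.natDegree ≤ m) :
    ∑ h ∈ (Gset p m).filter (fun h => h ≠ 0 ∧ a ∣ h), rp p h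
      = ((m : ℝ) - (a.natDegree : ℝ)) * (((p : ℝ) ^ 2 - 1) / (3 * p))
        * (p : ℝ) ^ (-(a.natDegree : ℤ)) :=
  sum_rp_dvd_general p m a ha hadeg
end

section
/- Let p prime, m ≥ 1, s ≥ 1, f ∈ F_p[x] with deg(f) = m, g = (g_1,...,g_s) ∈ G_{p,m}^s and product weights γ_i > 0. Then R^s_γ(g, f) := Σ_{h ∈ G_{p,m}^s \ {0}, h·g ≡ 0 mod f} Π_{i=1}^s r_p(h_i, γ_i) equals -Π_{i=1}^s (1+γ_i) + p^{-m} Σ_{v ∈ G_{p,m}} Π_{i=1}^s (1 + γ_i + γ_i Σ_{h ∈ G_{p,m}\{0}} r_p(h) X_p((v/f) h g_i)). -/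
open Polynomial Finset
open scoped Classical

/-- `r_p(h,γ) = 1+γ` if `h = 0` and `γ r_p(h)` otherwise. -/
noncomputable def rpw (p : ℕ) (h : Polynomial (ZMod p)) (γ : ℝ) : ℝ :=
  if h = 0 then 1 + γ else γ * rp p h

/-- The expansion of a rational function over `F_p` as a formal Laurent series in `x⁻¹`:
we substitute `x ↦ t⁻¹` where `t` is the variable of `LaurentSeries (ZMod p)`, so that the
coefficient of `x^{-l}` is the coefficient of `t^l`. -/
noncomputable def laurentAtInfty (p : ℕ) [Fact p.Prime] (q : RatFunc (ZMod p)) :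
    LaurentSeries (ZMod p) :=
  RatFunc.eval (HahnSeries.C : ZMod p →+* LaurentSeries (ZMod p))
    (HahnSeries.single (-1 : ℤ) (1 : ZMod p)) q

/-- `X_p(L) = e^{2πi c_{-1}(L)/p}`, where `c_{-1}(L)` is the coefficient of `x⁻¹` of the
Laurent series expansion in `x⁻¹` of the rational function `q`. -/
noncomputable def Xp (p : ℕ) [Fact p.Prime] (q : RatFunc (ZMod p)) : ℂ :=
  Complex.exp (2 * Real.pi * Complex.I * (((laurentAtInfty p q).coeff 1).val : ℂ) / p)

/-- The quantity `R^d_γ(g,f)` for product weights `γ`. -/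
noncomputable def Rq (p m : ℕ) [NeZero p] (d : ℕ) (f : Polynomial (ZMod p))
    (g : Fin d → Polynomial (ZMod p)) (γ : ℕ → ℝ) : ℝ :=
  ∑ h ∈ (Fintype.piFinset fun _ : Fin d => Gset p m).filter
      (fun h => h ≠ 0 ∧ f ∣ ∑ i, h i * g i),
    ∏ i, rpw p (h i) (γ (i : ℕ))

/-!
Expanding each factor as a sum over all `h ∈ G_{p,m}` (the term `h = 0` contributes `1 + γ_i`)
and multiplying out, the right-hand side becomes
`p^{-m} ∑_h ∏_i r_p(h_i, γ_i) ∑_v X_p((v/f)(h·g))`. As `X_p` is an additive character that is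
trivial on polynomials, `v ↦ X_p((v/f) w)` is a character of `G_{p,m} ≅ F_p^m`, and it is trivial
exactly when `f ∣ w`: if `r = w mod f ≠ 0`, the expansion of `r/f` at infinity has order
`k + 1 = deg f - deg r ≥ 1`, so `v = x^k` moves its nonzero leading coefficient to `x^{-1}`.
Orthogonality keeps the `h` with `f ∣ h·g`, and the term `h = 0` is `∏_i (1 + γ_i)`.
-/

theorem AddChar.map_sum_eq_prod {ι A M : Type*} [AddCommMonoid A] [CommMonoid M]
    (ψ : AddChar A M) (t : Finset ι) (a : ι → A) : ψ (∑ i ∈ t, a i) = ∏ i ∈ t, ψ (a i) := by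
  classical
  induction t using Finset.induction_on with
  | empty => simp
  | insert j t hj ih => rw [sum_insert hj, prod_insert hj, map_add_eq_mul, ih]

theorem prod_sum_mul_addChar_mul {ι S R : Type*} [Fintype ι] [DecidableEq ι] [CommSemiring S]
    [CommSemiring R] (t : Finset S) (a : ι → S → R) (ψ : AddChar S R) (g : ι → S) :
    ∏ i, ∑ h ∈ t, a i h * ψ (h * g i) =
      ∑ h ∈ Fintype.piFinset fun _ => t, (∏ i, a i (h i)) * ψ (∑ i, h i * g i) := by
  rw [prod_univ_sum]
  refine sum_congr rfl fun h _ => ?_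
  rw [prod_mul_distrib, ψ.map_sum_eq_prod]

theorem one_add_add_mul_sum_rp_eq_sum_rpw {p : ℕ} {G : Finset (ZMod p)[X]} (hG : 0 ∈ G)
    (e : (ZMod p)[X] → ℂ) (he : e 0 = 1) (γ : ℝ) :
    1 + (γ : ℂ) + γ * ∑ h ∈ G.filter (· ≠ 0), (rp p h : ℂ) * e h =
      ∑ h ∈ G, (rpw p h γ : ℂ) * e h := by
  rw [← add_sum_erase _ _ hG, ← filter_ne' G 0, mul_sum, rpw, if_pos rfl, he]
  push_cast
  rw [mul_one]
  refine congrArg _ (sum_congr rfl fun h hh => ?_)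
  rw [rpw, if_neg (mem_filter.1 hh).2]
  push_cast
  ring

section LaurentAtInfty

variable (K : Type*)

noncomputable def polyToLaurentAtInfty [CommSemiring K] : K[X] →+* LaurentSeries K :=
  eval₂RingHom HahnSeries.C (HahnSeries.single (-1) 1)

variable {K}

section CommSemiring

variable [CommSemiring K]

theorem polyToLaurentAtInfty_monomial (n : ℕ) (a : K) :
    polyToLaurentAtInfty K (monomial n a) = HahnSeries.single (-(n : ℤ)) a := by
  simp [polyToLaurentAtInfty, HahnSeries.single_pow, HahnSeries.C_apply]

theorem coeff_polyToLaurentAtInfty_neg_natCast (q : K[X]) (n : ℕ) :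
    (polyToLaurentAtInfty K q).coeff (-(n : ℤ)) = q.coeff n := by
  induction q using Polynomial.induction_on' with
  | add q r hq hr => simp [hq, hr]
  | monomial k a =>
    simp [polyToLaurentAtInfty_monomial, coeff_monomial, HahnSeries.coeff_single, eq_comm]

theorem coeff_polyToLaurentAtInfty_of_pos (q : K[X]) {e : ℤ} (he : 0 < e) :
    (polyToLaurentAtInfty K q).coeff e = 0 := by
  induction q using Polynomial.induction_on' with
  | add q r hq hr => simp [hq, hr]
  | monomial k a =>
    rw [polyToLaurentAtInfty_monomial, HahnSeries.coeff_single_of_ne (by omega)]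

theorem polyToLaurentAtInfty_injective : Function.Injective (polyToLaurentAtInfty K) := by
  intro q r h
  ext n
  rw [← coeff_polyToLaurentAtInfty_neg_natCast, h, coeff_polyToLaurentAtInfty_neg_natCast]

theorem order_polyToLaurentAtInfty {q : K[X]} (hq : q ≠ 0) :
    (polyToLaurentAtInfty K q).order = -(q.natDegree : ℤ) := by
  have hlead : (polyToLaurentAtInfty K q).coeff (-(q.natDegree : ℤ)) ≠ 0 := by
    rwa [coeff_polyToLaurentAtInfty_neg_natCast, ← leadingCoeff, leadingCoeff_ne_zero]
  refine le_antisymm (HahnSeries.order_le_of_coeff_ne_zero hlead) (not_lt.1 fun hlt => ?_)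
  have hne := mt HahnSeries.coeff_order_eq_zero.1 (HahnSeries.ne_zero_of_coeff_ne_zero hlead)
  obtain ⟨n, hn⟩ : ∃ n : ℕ, (polyToLaurentAtInfty K q).order = -(n : ℤ) :=
    ⟨(-(polyToLaurentAtInfty K q).order).toNat, by omega⟩
  rw [hn, coeff_polyToLaurentAtInfty_neg_natCast] at hne
  exact hne (coeff_eq_zero_of_natDegree_lt (by omega))

end CommSemiring

variable (K) [Field K]

noncomputable def ratFuncToLaurentAtInfty : RatFunc K →+* LaurentSeries K :=
  RatFunc.liftRingHom (polyToLaurentAtInfty K)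
    (nonZeroDivisors_le_comap_nonZeroDivisors_of_injective _ polyToLaurentAtInfty_injective)

variable {K}

theorem ratFuncToLaurentAtInfty_algebraMap (q : K[X]) :
    ratFuncToLaurentAtInfty K (algebraMap K[X] (RatFunc K) q) = polyToLaurentAtInfty K q :=
  RatFunc.liftRingHom_algebraMap _ _ _

theorem order_polyToLaurentAtInfty_div {r f : K[X]} (hr : r ≠ 0) (hf : f ≠ 0) :
    (polyToLaurentAtInfty K r / polyToLaurentAtInfty K f).order =
      f.natDegree - r.natDegree := by
  have hf' : polyToLaurentAtInfty K f ≠ 0 :=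
    (map_ne_zero_iff _ polyToLaurentAtInfty_injective).2 hf
  have hr' : polyToLaurentAtInfty K r ≠ 0 :=
    (map_ne_zero_iff _ polyToLaurentAtInfty_injective).2 hr
  have h := HahnSeries.order_mul (div_ne_zero hr' hf') hf'
  rw [div_mul_cancel₀ _ hf', order_polyToLaurentAtInfty hr, order_polyToLaurentAtInfty hf] at h
  omega

end LaurentAtInfty

section Gset

variable {p m : ℕ} [NeZero p]

theorem Gset_eq_image_degreeLTEquiv_symm :
    Gset p m = univ.image fun c => ((degreeLTEquiv (ZMod p) m).symm c : (ZMod p)[X]) := by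
  simp [Gset, degreeLTEquiv, C_mul_X_pow_eq_monomial]

theorem sum_Gset {M : Type*} [AddCommMonoid M] (F : (ZMod p)[X] → M) :
    ∑ v ∈ Gset p m, F v = ∑ c, F ((degreeLTEquiv (ZMod p) m).symm c) := by
  rw [Gset_eq_image_degreeLTEquiv_symm,
    sum_image fun c _ d _ h => (degreeLTEquiv (ZMod p) m).symm.injective (Subtype.ext h)]

theorem zero_mem_Gset : (0 : (ZMod p)[X]) ∈ Gset p m := by
  rw [Gset_eq_image_degreeLTEquiv_symm]
  exact mem_image.2 ⟨0, mem_univ _, by simp⟩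

end Gset

section Character

variable {p : ℕ} [Fact p.Prime] {m : ℕ}

local notation "A" => algebraMap (ZMod p)[X] (RatFunc (ZMod p))

theorem laurentAtInfty_eq_ratFuncToLaurentAtInfty :
    laurentAtInfty p = ratFuncToLaurentAtInfty (ZMod p) := by
  ext1 q
  rw [ratFuncToLaurentAtInfty, RatFunc.liftRingHom_apply]
  rfl

theorem Xp_eq_stdAddChar (q : RatFunc (ZMod p)) :
    Xp p q = ZMod.stdAddChar ((laurentAtInfty p q).coeff 1) := by
  rw [ZMod.stdAddChar_apply, ZMod.toCircle_apply, Xp]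

variable (p) in
noncomputable def XpMulChar (x : RatFunc (ZMod p)) : AddChar (ZMod p)[X] ℂ :=
  ZMod.stdAddChar.compAddMonoidHom
    ((HahnSeries.coeff.addMonoidHom 1).comp
      ((ratFuncToLaurentAtInfty (ZMod p)).toAddMonoidHom.comp
        ((AddMonoidHom.mulLeft x).comp (algebraMap (ZMod p)[X] (RatFunc (ZMod p))).toAddMonoidHom)))

theorem XpMulChar_apply (x : RatFunc (ZMod p)) (w : (ZMod p)[X]) :
    XpMulChar p x w = Xp p (x * A w) := by
  rw [Xp_eq_stdAddChar, laurentAtInfty_eq_ratFuncToLaurentAtInfty]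
  rfl

theorem XpMulChar_add_algebraMap (x : RatFunc (ZMod p)) (u : (ZMod p)[X]) :
    XpMulChar p (x + A u) = XpMulChar p x := by
  ext w
  simp only [XpMulChar_apply, Xp_eq_stdAddChar, laurentAtInfty_eq_ratFuncToLaurentAtInfty,
    add_mul, ← map_mul, map_add, HahnSeries.coeff_add, ratFuncToLaurentAtInfty_algebraMap,
    coeff_polyToLaurentAtInfty_of_pos _ one_pos, add_zero]

theorem XpMulChar_div_of_dvd {f w : (ZMod p)[X]} (hf : f ≠ 0) (hfw : f ∣ w) :
    XpMulChar p (A w / A f) = 0 := by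
  obtain ⟨u, rfl⟩ := hfw
  rw [map_mul, mul_div_cancel_left₀ _ (RatFunc.algebraMap_ne_zero hf), ← zero_add (A u),
    XpMulChar_add_algebraMap]
  ext w
  simp [XpMulChar_apply, Xp_eq_stdAddChar, laurentAtInfty_eq_ratFuncToLaurentAtInfty]

theorem exists_XpMulChar_div_ne_one {r f : (ZMod p)[X]} (hr : r ≠ 0)
    (hrf : r.degree < f.degree) :
    ∃ v : (ZMod p)[X], v.degree < f.degree ∧ XpMulChar p (A r / A f) v ≠ 1 := by
  have hf : f ≠ 0 := ne_zero_of_degree_gt hrf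
  have hlt := natDegree_lt_natDegree hr hrf
  set L := polyToLaurentAtInfty (ZMod p) r / polyToLaurentAtInfty (ZMod p) f
  set k := f.natDegree - r.natDegree - 1
  have hL : L ≠ 0 := div_ne_zero ((map_ne_zero_iff _ polyToLaurentAtInfty_injective).2 hr)
    ((map_ne_zero_iff _ polyToLaurentAtInfty_injective).2 hf)
  have horder : L.order = 1 - (-(k : ℤ)) := by
    rw [order_polyToLaurentAtInfty_div hr hf]
    omega
  refine ⟨X ^ k, ?_, ?_⟩
  · rw [degree_X_pow, degree_eq_natDegree hf]
    exact_mod_cast (by omega : k < f.natDegree)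
  · rw [XpMulChar_apply, Xp_eq_stdAddChar, laurentAtInfty_eq_ratFuncToLaurentAtInfty, map_mul,
      map_div₀, ratFuncToLaurentAtInfty_algebraMap, ratFuncToLaurentAtInfty_algebraMap,
      ratFuncToLaurentAtInfty_algebraMap, X_pow_eq_monomial, polyToLaurentAtInfty_monomial,
      HahnSeries.coeff_mul_single, mul_one, ← horder,
      ← AddChar.map_zero_eq_one (ZMod.stdAddChar (N := p)), Ne, ZMod.injective_stdAddChar.eq_iff]
    exact mt HahnSeries.coeff_order_eq_zero.1 hL

theorem sum_Gset_XpMulChar_div {f : (ZMod p)[X]} (hf : f.degree = m) (w : (ZMod p)[X]) :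
    ∑ v ∈ Gset p m, XpMulChar p (A w / A f) v = if f ∣ w then (p : ℂ) ^ m else 0 := by
  have hf0 : f ≠ 0 := by rintro rfl; simp at hf
  let ψ := (XpMulChar p (A w / A f)).compAddMonoidHom
    ((degreeLT (ZMod p) m).subtype.comp (degreeLTEquiv (ZMod p) m).symm.toLinearMap).toAddMonoidHom
  have hψ : ψ = 0 ↔ f ∣ w := by
    refine ⟨fun h => by_contra fun hfw => ?_, fun h => ?_⟩
    · have hr : w % f ≠ 0 := mt EuclideanDomain.mod_eq_zero.1 hfw
      obtain ⟨v, hv, hne⟩ := exists_XpMulChar_div_ne_one hr (degree_mod_lt w hf0)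
      have hreduce : XpMulChar p (A w / A f) = XpMulChar p (A (w % f) / A f) := by
        conv_lhs => rw [← EuclideanDomain.mod_add_div w f]
        rw [map_add, add_div, map_mul, mul_div_cancel_left₀ _ (RatFunc.algebraMap_ne_zero hf0),
          XpMulChar_add_algebraMap]
      have hvm : v ∈ degreeLT (ZMod p) m := mem_degreeLT.2 (hf ▸ hv)
      refine hne (hreduce ▸ ?_)
      simpa [ψ] using AddChar.ext_iff.1 h (degreeLTEquiv (ZMod p) m ⟨v, hvm⟩)
    · ext c
      simp [ψ, XpMulChar_div_of_dvd hf0 h]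
  rw [sum_Gset]
  change ∑ c, ψ c = _
  simp only [AddChar.sum_eq_ite, hψ, Fintype.card_pi, ZMod.card, prod_const, card_univ,
    Fintype.card_fin, Nat.cast_pow]

end Character


section Assembly

variable {p : ℕ} [Fact p.Prime] {m s : ℕ}

local notation "A" => algebraMap (ZMod p)[X] (RatFunc (ZMod p))

theorem XpMulChar_div_comm (f v w : (ZMod p)[X]) :
    XpMulChar p (A v / A f) w = XpMulChar p (A w / A f) v := by
  rw [XpMulChar_apply, XpMulChar_apply, div_mul_eq_mul_div, div_mul_eq_mul_div, mul_comm]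

theorem sum_Gset_prod_eq {f : (ZMod p)[X]} (hf : f.degree = m) (g : Fin s → (ZMod p)[X])
    (γ : ℕ → ℝ) :
    ∑ v ∈ Gset p m, ∏ i : Fin s, (1 + (γ i : ℂ) + γ i *
        ∑ h ∈ (Gset p m).filter (· ≠ 0), (rp p h : ℂ) * Xp p (A v / A f * A (h * g i))) =
      (p : ℂ) ^ m * ∑ h ∈ (Fintype.piFinset fun _ : Fin s => Gset p m).filter
        (fun h => f ∣ ∑ i, h i * g i), ∏ i, (rpw p (h i) (γ i) : ℂ) := by
  calc _ = ∑ v ∈ Gset p m, ∑ h ∈ Fintype.piFinset fun _ : Fin s => Gset p m,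
        (∏ i, (rpw p (h i) (γ i) : ℂ)) * XpMulChar p (A v / A f) (∑ i, h i * g i) := by
        refine sum_congr rfl fun v _ => ?_
        rw [← prod_sum_mul_addChar_mul _ fun (i : Fin s) h => (rpw p h (γ i) : ℂ)]
        refine prod_congr rfl fun i _ => ?_
        simp_rw [← XpMulChar_apply]
        exact one_add_add_mul_sum_rp_eq_sum_rpw zero_mem_Gset _ (by simp) _
    _ = ∑ h ∈ Fintype.piFinset fun _ : Fin s => Gset p m, (∏ i, (rpw p (h i) (γ i) : ℂ)) *
        if f ∣ ∑ i, h i * g i then (p : ℂ) ^ m else 0 := by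
        rw [sum_comm]
        refine sum_congr rfl fun h _ => ?_
        simp only [XpMulChar_div_comm f _ (∑ i, h i * g i), ← mul_sum, sum_Gset_XpMulChar_div hf]
    _ = _ := by
        rw [sum_filter, mul_sum]
        exact sum_congr rfl fun h _ => by split_ifs <;> ring

theorem Rq_add_prod_eq (f : (ZMod p)[X]) (g : Fin s → (ZMod p)[X]) (γ : ℕ → ℝ) :
    (Rq p m s f g γ : ℂ) + ∏ i : Fin s, (1 + (γ i : ℂ)) =
      ∑ h ∈ (Fintype.piFinset fun _ : Fin s => Gset p m).filter
        (fun h => f ∣ ∑ i, h i * g i), ∏ i, (rpw p (h i) (γ i) : ℂ) := by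
  have h0 : (0 : Fin s → (ZMod p)[X]) ∈ (Fintype.piFinset fun _ : Fin s => Gset p m).filter
      (fun h => f ∣ ∑ i, h i * g i) := by
    simp [zero_mem_Gset]
  have herase : ((Fintype.piFinset fun _ : Fin s => Gset p m).filter
      (fun h => f ∣ ∑ i, h i * g i)).erase 0 = (Fintype.piFinset fun _ : Fin s => Gset p m).filter
      (fun h => h ≠ 0 ∧ f ∣ ∑ i, h i * g i) := by
    ext h
    simp only [mem_erase, mem_filter]
    tauto
  rw [← add_sum_erase _ _ h0, herase, add_comm, Rq]
  simp [rpw]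

end Assembly

theorem R_eq_char_sum_general (p : ℕ) [Fact p.Prime] (m s : ℕ)
    (f : Polynomial (ZMod p)) (hf : f.degree = (m : ℕ))
    (g : Fin s → Polynomial (ZMod p))
    (γ : ℕ → ℝ) :
    ((Rq p m s f g γ : ℝ) : ℂ)
      = -∏ i : Fin s, (1 + (γ (i : ℕ) : ℂ))
        + ((p : ℂ) ^ m)⁻¹ * ∑ v ∈ Gset p m, ∏ i : Fin s,
            (1 + (γ (i : ℕ) : ℂ) + (γ (i : ℕ) : ℂ) *
              ∑ h ∈ (Gset p m).filter (fun h => h ≠ 0),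
                (rp p h : ℂ) *
                  Xp p (algebraMap (Polynomial (ZMod p)) (RatFunc (ZMod p)) v
                    / algebraMap (Polynomial (ZMod p)) (RatFunc (ZMod p)) f
                    * algebraMap (Polynomial (ZMod p)) (RatFunc (ZMod p)) (h * g i))) := by
  have hp : (p : ℂ) ^ m ≠ 0 := pow_ne_zero _ (Nat.cast_ne_zero.2 (Fact.out : p.Prime).ne_zero)
  rw [sum_Gset_prod_eq hf, inv_mul_cancel_left₀ hp, ← Rq_add_prod_eq]
  ring

/-- `R^s_γ(g,f)` equals the character-sum expression. -/
theorem R_eq_char_sum (p : ℕ) [Fact p.Prime] (m s : ℕ) (hm : 1 ≤ m) (hs : 1 ≤ s)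
    (f : Polynomial (ZMod p)) (hf : f.degree = (m : ℕ))
    (g : Fin s → Polynomial (ZMod p)) (hg : ∀ i, g i ∈ Gset p m)
    (γ : ℕ → ℝ) (hγ : ∀ i, 0 < γ i) :
    ((Rq p m s f g γ : ℝ) : ℂ)
      = -∏ i : Fin s, (1 + (γ (i : ℕ) : ℂ))
        + ((p : ℂ) ^ m)⁻¹ * ∑ v ∈ Gset p m, ∏ i : Fin s,
            (1 + (γ (i : ℕ) : ℂ) + (γ (i : ℕ) : ℂ) *
              ∑ h ∈ (Gset p m).filter (fun h => h ≠ 0),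
                (rp p h : ℂ) *
                  Xp p (algebraMap (Polynomial (ZMod p)) (RatFunc (ZMod p)) v
                    / algebraMap (Polynomial (ZMod p)) (RatFunc (ZMod p)) f
                    * algebraMap (Polynomial (ZMod p)) (RatFunc (ZMod p)) (h * g i))) :=
  R_eq_char_sum_general p m s f hf g γ
end

section
/- Let (γ_j)_{j≥1} be a summable sequence of positive reals with γ_j ≤ 1, and set γ_𝔲 := Π_{j∈𝔲} γ_j for finite 𝔲 ⊆ ℕ. Then for all N ≥ 1 and s ≥ 1, Σ_{∅≠𝔲⊆[s]} γ_𝔲 (1 - (1 - 1/N)^{|𝔲|}) ≤ max(1, Γ) · e^{Σ_{i=1}^∞ γ_i} / N, where Γ := Σ_{i=1}^∞ γ_i/(1+γ_i). -/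
open Finset

/-! Bernoulli's inequality bounds `1 - (1 - 1/N)^{|𝔲|}` by `|𝔲|/N`. Differentiating the generating
identity `Σ_{𝔲 ⊆ S} γ_𝔲 = Π_{i ∈ S} (1 + γ_i)` gives
`Σ_{𝔲 ⊆ S} γ_𝔲 |𝔲| = Π_{i ∈ S} (1 + γ_i) · Σ_{j ∈ S} γ_j / (1 + γ_j)`, and the product is at most
`e^{Σ γ_i}` by `1 + x ≤ eˣ`. -/

lemma one_sub_one_sub_pow_le {R : Type*} [Ring R] [LinearOrder R] [IsStrictOrderedRing R]
    {x : R} (hx : x ≤ 2) (n : ℕ) : 1 - (1 - x) ^ n ≤ n * x := by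
  have h := one_add_mul_le_pow (neg_le_neg hx) n
  rw [← sub_eq_add_neg, mul_neg, ← sub_eq_add_neg] at h
  exact sub_le_comm.mp h

theorem Finset.sum_powerset_prod_mul_card {ι K : Type*} [DecidableEq ι] [Field K] {f : ι → K}
    (s : Finset ι) (hf : ∀ i ∈ s, 1 + f i ≠ 0) :
    ∑ t ∈ s.powerset, (∏ i ∈ t, f i) * t.card
      = (∏ i ∈ s, (1 + f i)) * ∑ i ∈ s, f i / (1 + f i) := by
  induction s using Finset.induction with
  | empty => simp
  | insert a s ha ih =>
    have hfa : 1 + f a ≠ 0 := hf a (mem_insert_self a s)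
    have hrec := ih fun i hi => hf i (mem_insert_of_mem hi)
    have hinsert : ∑ t ∈ s.powerset, (∏ i ∈ insert a t, f i) * (insert a t).card
        = f a * ∑ t ∈ s.powerset, ((∏ i ∈ t, f i) * t.card + ∏ i ∈ t, f i) := by
      rw [mul_sum]
      refine sum_congr rfl fun t ht => ?_
      have hat : a ∉ t := fun h => ha (mem_powerset.mp ht h)
      rw [prod_insert hat, card_insert_of_notMem hat]
      push_cast
      ring
    rw [sum_powerset_insert ha, hinsert, sum_add_distrib, hrec, ← prod_one_add,
      prod_insert ha, sum_insert ha]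
    field_simp
    ring

theorem joe_bound_general (γ : ℕ → ℝ) (hpos : ∀ i, 0 < γ i)
    (hsum : Summable γ) (N s : ℕ) :
    ∑ u ∈ (Finset.range s).powerset.filter (fun u => u ≠ ∅),
        (∏ j ∈ u, γ j) * (1 - (1 - 1 / (N : ℝ)) ^ u.card)
      ≤ max 1 (∑' i, γ i / (1 + γ i)) * Real.exp (∑' i, γ i) / N := by
  have hγ : ∀ i, 0 ≤ γ i := fun i => (hpos i).le
  have hratio : ∀ i, 0 ≤ γ i / (1 + γ i) := fun i => div_nonneg (hγ i) (by linarith [hγ i])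
  have hratio_summable : Summable fun i => γ i / (1 + γ i) :=
    hsum.of_nonneg_of_le hratio fun i => div_le_self (hγ i) (le_add_of_nonneg_right (hγ i))
  have hterm : ∀ u : Finset ℕ, (∏ j ∈ u, γ j) * (1 - (1 - 1 / (N : ℝ)) ^ u.card)
      ≤ (∏ j ∈ u, γ j) * u.card / N := fun u => by
    rw [mul_div_assoc, ← mul_one_div (u.card : ℝ)]
    gcongr
    · exact prod_nonneg fun j _ => hγ j
    · exact one_sub_one_sub_pow_le (by rw [one_div]; linarith [Nat.cast_inv_le_one (α := ℝ) N]) _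
  calc _ ≤ ∑ u ∈ (range s).powerset, (∏ j ∈ u, γ j) * u.card / N :=
        (sum_le_sum fun u _ => hterm u).trans <| sum_le_sum_of_subset_of_nonneg (filter_subset _ _)
          fun u _ _ => by positivity [prod_nonneg fun j (_ : j ∈ u) => hγ j]
    _ = (∏ i ∈ range s, (1 + γ i)) * (∑ i ∈ range s, γ i / (1 + γ i)) / N := by
        rw [← sum_div, sum_powerset_prod_mul_card _ fun i _ => by linarith [hγ i]]
    _ ≤ Real.exp (∑' i, γ i) * max 1 (∑' i, γ i / (1 + γ i)) / N := by
        gcongr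
        · exact sum_nonneg fun i _ => hratio i
        · exact (Real.prod_one_add_le_exp_sum _ hγ).trans
            (Real.exp_le_exp.mpr (hsum.sum_le_tsum _ fun i _ => hγ i))
        · exact (hratio_summable.sum_le_tsum _ fun i _ => hratio i).trans (le_max_right _ _)
    _ = _ := by rw [mul_comm (Real.exp _)]

/-- Joe's bound: for summable product weights `γ` (here `γ i` is the weight `γ_{i+1}` of the
paper, i.e. indices are shifted by one),
`Σ_{∅≠𝔲⊆[s]} γ_𝔲 (1 - (1-1/N)^{|𝔲|}) ≤ max(1,Γ) e^{Σ γ_i} / N` where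
`Γ = Σ_i γ_i/(1+γ_i)`. -/
theorem joe_bound (γ : ℕ → ℝ) (hpos : ∀ i, 0 < γ i) (hle : ∀ i, γ i ≤ 1)
    (hsum : Summable γ) (N s : ℕ) (hN : 1 ≤ N) (hs : 1 ≤ s) :
    ∑ u ∈ (Finset.range s).powerset.filter (fun u => u ≠ ∅),
        (∏ j ∈ u, γ j) * (1 - (1 - 1 / (N : ℝ)) ^ u.card)
      ≤ max 1 (∑' i, γ i / (1 + γ i)) * Real.exp (∑' i, γ i) / N :=
  joe_bound_general γ hpos hsum N s
end
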